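/- Let z be a standard normal random variable and β > 0. Then E[ g'(−β|z|) ] ≤ min{ 1/2, 1/2 − (β/4)·√(2/π)·(1 − β²/6), (1/β)·√(2/π) }, where g'(η) = 1/(1+e^{−η}). -/

import Mathlib

open MeasureTheory ProbabilityTheory Real

noncomputable def logistic (η : ℝ) : ℝ := 1 / (1 + Real.exp (-η))

/-!
Write `t = β|z| ≥ 0`, so that the integrand is `σ(-t) = 1 / (1 + eᵗ)`. Each of the three bounds
comes from a pointwise bound on `σ(-t)`: `σ(-t) ≤ 1/2`; `σ(-t) ≤ 1/2 - t/4 + t³/48` (that is,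
`tanh u ≥ u - u³/3`), integrated against the absolute moments `E|z| = √(2/π)` and
`E|z|³ = 2√(2/π)`; and `σ(-t) ≤ e^{-t}`, whose Gaussian expectation is at most
`√(2/π) ∫₀^∞ e^{-βx} dx = √(2/π)/β` because the half-normal density is at most `√(2/π)`.
-/

open Set

lemma nonneg_of_hasDerivAt_of_nonneg {f f' : ℝ → ℝ} (hf : ∀ x, HasDerivAt f (f' x) x)
    (hf' : ∀ x, 0 < x → 0 ≤ f' x) (h0 : f 0 = 0) {x : ℝ} (hx : 0 ≤ x) : 0 ≤ f x := by
  have hmono : MonotoneOn f (Ici 0) :=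
    monotoneOn_of_hasDerivWithinAt_nonneg (convex_Ici 0)
      (fun y _ => (hf y).continuousAt.continuousWithinAt)
      (fun y _ => (hf y).hasDerivWithinAt) (by simpa using hf')
  simpa [h0] using hmono self_mem_Ici hx hx

lemma logistic_neg (t : ℝ) : logistic (-t) = 1 / (1 + exp t) := by
  rw [logistic, neg_neg]

lemma logistic_nonneg (η : ℝ) : 0 ≤ logistic η := by
  unfold logistic
  positivity

lemma logistic_le_half {η : ℝ} (hη : η ≤ 0) : logistic η ≤ 1 / 2 := by
  rw [← neg_neg η, logistic_neg]
  gcongr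
  linarith [one_le_exp (neg_nonneg.2 hη)]

lemma logistic_le_exp (η : ℝ) : logistic η ≤ exp η := by
  rw [logistic, div_le_iff₀ (by positivity), mul_add, ← exp_add, add_neg_cancel, exp_zero]
  linarith [exp_pos η]

lemma hasDerivAt_one_div_one_add_exp (t : ℝ) :
    HasDerivAt (fun t => 1 / (1 + exp t)) (-(exp t / (1 + exp t) ^ 2)) t := by
  have := (hasDerivAt_const t (1 : ℝ)).div ((hasDerivAt_exp t).const_add 1) (by positivity)
  exact this.congr_deriv (by ring)

lemma two_mul_exp_sub_one_le {t : ℝ} (ht : 0 ≤ t) : 2 * (exp t - 1) ≤ t * (exp t + 1) := by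
  have hderiv (s : ℝ) : HasDerivAt (fun s => s * (exp s + 1) - 2 * (exp s - 1))
      (1 - exp s + s * exp s) s := by
    have := ((hasDerivAt_id s).mul ((hasDerivAt_exp s).add_const 1)).sub
      (((hasDerivAt_exp s).sub_const 1).const_mul 2)
    exact this.congr_deriv (by simp only [id_eq]; ring)
  -- `1 - s ≤ exp (-s)`, multiplied by `exp s`
  have hderiv_nonneg (s : ℝ) (_ : 0 < s) : 0 ≤ 1 - exp s + s * exp s := by
    have h := mul_le_mul_of_nonneg_right (by linarith [add_one_le_exp (-s)] : 1 - s ≤ exp (-s))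
      (exp_pos s).le
    rw [← exp_add, neg_add_cancel, exp_zero] at h
    linarith
  have := nonneg_of_hasDerivAt_of_nonneg hderiv hderiv_nonneg (by simp) ht
  linarith

lemma logistic_neg_le_cubic {t : ℝ} (ht : 0 ≤ t) : logistic (-t) ≤ 1 / 2 - t / 4 + t ^ 3 / 48 := by
  have hderiv (s : ℝ) : HasDerivAt (fun s => 1 / 2 - s / 4 + s ^ 3 / 48 - 1 / (1 + exp s))
      (-(1 / 4) + s ^ 2 / 16 + exp s / (1 + exp s) ^ 2) s := by
    have := ((((hasDerivAt_id s).div_const 4).const_sub (1 / 2)).add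
      ((hasDerivAt_pow 3 s).div_const 48)).sub (hasDerivAt_one_div_one_add_exp s)
    exact this.congr_deriv (by push_cast; ring)
  -- the derivative is a difference of squares, `tanh (s / 2) ≤ s / 2` in disguise
  have hderiv_nonneg (s : ℝ) (hs : 0 < s) :
      0 ≤ -(1 / 4) + s ^ 2 / 16 + exp s / (1 + exp s) ^ 2 := by
    have hle := two_mul_exp_sub_one_le hs.le
    have hexp := one_le_exp hs.le
    have heq : -(1 / 4) + s ^ 2 / 16 + exp s / (1 + exp s) ^ 2 =
        ((s * (exp s + 1)) ^ 2 - (2 * (exp s - 1)) ^ 2) / (16 * (1 + exp s) ^ 2) := by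
      field_simp
      ring
    rw [heq]
    apply div_nonneg _ (by positivity)
    nlinarith
  have := nonneg_of_hasDerivAt_of_nonneg hderiv hderiv_nonneg (by norm_num) ht
  rw [logistic_neg]
  linarith

lemma integrable_abs_pow_gaussianReal (n : ℕ) :
    Integrable (fun z : ℝ => |z| ^ n) (gaussianReal 0 1) := by
  simpa using (memLp_id_gaussianReal (μ := 0) (v := 1) n).integrable_norm_pow'

lemma integral_gaussianReal_comp_abs (f : ℝ → ℝ) :
    ∫ z, f |z| ∂(gaussianReal 0 1) = √(2 / π) * ∫ x in Ioi 0, exp (-x ^ 2 / 2) * f x := by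
  have hpdf (z : ℝ) : gaussianPDFReal 0 1 z = (√(2 * π))⁻¹ * exp (-|z| ^ 2 / 2) := by
    simp [gaussianPDFReal]
  have hconst : 2 * (√(2 * π))⁻¹ = √(2 / π) := by
    rw [show 2 / π = 2 ^ 2 / (2 * π) by field_simp, sqrt_div (by positivity),
      sqrt_sq zero_le_two, div_eq_mul_inv]
  simp_rw [integral_gaussianReal_eq_integral_smul one_ne_zero, smul_eq_mul, hpdf, mul_assoc]
  rw [integral_comp_abs (f := fun x => (√(2 * π))⁻¹ * (exp (-x ^ 2 / 2) * f x)),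
    integral_const_mul, ← mul_assoc, hconst]

lemma integral_Ioi_pow_odd_mul_exp_neg_sq_div_two (k : ℕ) :
    ∫ x in Ioi (0 : ℝ), x ^ (2 * k + 1) * exp (-x ^ 2 / 2) = 2 ^ k * k.factorial := by
  have h := integral_rpow_mul_exp_neg_mul_rpow (p := 2) (q := (2 * k + 1 : ℕ)) (b := 1 / 2)
    two_pos (neg_one_lt_zero.trans_le (Nat.cast_nonneg _)) one_half_pos
  have hexp : -(((2 * k + 1 : ℕ) : ℝ) + 1) / 2 = -((k + 1 : ℕ) : ℝ) := by push_cast; ring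
  have hgam : (((2 * k + 1 : ℕ) : ℝ) + 1) / 2 = k + 1 := by push_cast; ring
  rw [hexp, hgam, Gamma_nat_eq_factorial, rpow_neg_natCast] at h
  simp only [rpow_natCast, rpow_two] at h
  convert h using 1
  · refine setIntegral_congr_fun measurableSet_Ioi fun x _ => ?_
    ring_nf
  · rw [zpow_neg, zpow_natCast, one_div, inv_pow, inv_inv, pow_succ]
    ring

lemma integral_abs_pow_odd_gaussianReal (k : ℕ) :
    ∫ z, |z| ^ (2 * k + 1) ∂(gaussianReal 0 1) = √(2 / π) * (2 ^ k * k.factorial) := by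
  rw [integral_gaussianReal_comp_abs (· ^ (2 * k + 1))]
  simp_rw [mul_comm (exp _)]
  rw [integral_Ioi_pow_odd_mul_exp_neg_sq_div_two]

lemma integral_logistic_neg_mul_abs_le_half {Ω : Type*} [MeasurableSpace Ω] {μ : Measure Ω}
    [IsProbabilityMeasure μ] {β : ℝ} (hβ : 0 ≤ β) (X : Ω → ℝ) :
    ∫ ω, logistic (-β * |X ω|) ∂μ ≤ 1 / 2 := by
  have := integral_mono_of_nonneg (.of_forall fun ω => logistic_nonneg (-β * |X ω|))
    (integrable_const (1 / 2 : ℝ) (μ := μ))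
    (.of_forall fun ω => logistic_le_half (by nlinarith [abs_nonneg (X ω)]))
  simpa using this

lemma integral_logistic_neg_mul_abs_gaussianReal_le_cubic {β : ℝ} (hβ : 0 ≤ β) :
    ∫ z, logistic (-β * |z|) ∂(gaussianReal 0 1)
      ≤ 1 / 2 - β / 4 * √(2 / π) * (1 - β ^ 2 / 6) := by
  have hm1 : ∫ z, |z| ^ 1 ∂(gaussianReal 0 1) = √(2 / π) := by
    simpa using integral_abs_pow_odd_gaussianReal 0
  have hm3 : ∫ z, |z| ^ 3 ∂(gaussianReal 0 1) = 2 * √(2 / π) := by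
    simpa [mul_comm] using integral_abs_pow_odd_gaussianReal 1
  have hint1 := (integrable_abs_pow_gaussianReal 1).const_mul (β / 4)
  have hint3 := (integrable_abs_pow_gaussianReal 3).const_mul (β ^ 3 / 48)
  have hpoly : ∫ z, (1 / 2 - β / 4 * |z| ^ 1 + β ^ 3 / 48 * |z| ^ 3) ∂(gaussianReal 0 1)
      = 1 / 2 - β / 4 * √(2 / π) * (1 - β ^ 2 / 6) := by
    rw [integral_add (f := fun z => 1 / 2 - β / 4 * |z| ^ 1)
        ((integrable_const _).sub hint1) hint3,
      integral_sub (f := fun _ => 1 / 2) (integrable_const _) hint1,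
      integral_const_mul, integral_const_mul, hm1, hm3]
    simp only [integral_const, probReal_univ, smul_eq_mul, one_mul]
    ring
  rw [← hpoly]
  refine integral_mono_of_nonneg (.of_forall fun z => logistic_nonneg _)
    (((integrable_const _).sub hint1).add hint3) (.of_forall fun z => ?_)
  have := logistic_neg_le_cubic (mul_nonneg hβ (abs_nonneg z))
  show logistic (-β * |z|) ≤ _
  rw [neg_mul]
  linarith [show (β * |z|) ^ 3 = β ^ 3 * |z| ^ 3 by ring]

lemma integral_logistic_neg_mul_abs_gaussianReal_le_inv {β : ℝ} (hβ : 0 < β) :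
    ∫ z, logistic (-β * |z|) ∂(gaussianReal 0 1) ≤ 1 / β * √(2 / π) := by
  rw [integral_gaussianReal_comp_abs (fun x => logistic (-β * x))]
  have hmono := integral_mono_of_nonneg (μ := volume.restrict (Ioi 0))
    (.of_forall fun x => mul_nonneg (exp_pos _).le (logistic_nonneg (-β * x)))
    (exp_neg_integrableOn_Ioi 0 hβ)
    (.of_forall fun x => by
      have hgauss : exp (-x ^ 2 / 2) ≤ 1 := exp_le_one_iff.2 (by nlinarith [sq_nonneg x])
      calc exp (-x ^ 2 / 2) * logistic (-β * x) ≤ 1 * exp (-β * x) :=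
            mul_le_mul hgauss (logistic_le_exp _) (logistic_nonneg _) zero_le_one
        _ = exp (-β * x) := one_mul _)
  have hexp : ∫ x in Ioi (0 : ℝ), exp (-β * x) = 1 / β := by
    rw [integral_exp_mul_Ioi (neg_lt_zero.2 hβ), mul_zero, exp_zero]
    field_simp
  rw [hexp] at hmono
  rw [mul_comm (1 / β)]
  exact mul_le_mul_of_nonneg_left hmono (sqrt_nonneg _)

/-- Gaussian integral bound (Lemma 14): for `z ~ N(0,1)` and `β > 0`,
`E[g'(-β|z|)] ≤ min{1/2, 1/2 - (β/4)√(2/π)(1 - β²/6), (1/β)√(2/π)}`. -/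
theorem stmt14 (β : ℝ) (hβ : 0 < β) :
    ∫ z, logistic (-β * |z|) ∂(gaussianReal 0 1)
      ≤ min (1 / 2) (min (1 / 2 - β / 4 * Real.sqrt (2 / π) * (1 - β ^ 2 / 6))
          ((1 / β) * Real.sqrt (2 / π))) :=
  le_min (integral_logistic_neg_mul_abs_le_half hβ.le id)
    (le_min (integral_logistic_neg_mul_abs_gaussianReal_le_cubic hβ.le)
      (integral_logistic_neg_mul_abs_gaussianReal_le_inv hβ))
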